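/- Let N_θ(x) = v₁σ(w₁·x) + v₂σ(w₂·x) be a bias-less 2-layer ReLU network of width n = 2 on ℝ^d. Suppose there is a dataset (x_i, y_i)_{i=1}^m with y_i ∈ {−1,+1} such that y_i N_θ(x_i) > 0 for all i ∈ [m], and y_i = −1 for at least one i. Then Pr_{x~Unif(S^{d−1})}[N_θ(x) ≤ 0] ≥ 1/2. -/

import Mathlib

open MeasureTheory

/-- ReLU. -/
noncomputable def relu (z : ℝ) : ℝ := max z 0

/-- Bias-less 2-layer ReLU network on ℝ^d. -/
noncomputable def netNB {d n : ℕ} (v : Fin n → ℝ) (w : Fin n → EuclideanSpace ℝ (Fin d))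
    (x : EuclideanSpace ℝ (Fin d)) : ℝ :=
  ∑ j, v j * relu (inner ℝ (w j) x : ℝ)

/-- Uniform probability measure on the unit sphere S^{d-1} ⊂ ℝ^d. -/
noncomputable def unifSphere (d : ℕ) : Measure (EuclideanSpace ℝ (Fin d)) :=
  (μH[(d : ℝ) - 1] (Metric.sphere (0 : EuclideanSpace ℝ (Fin d)) 1))⁻¹ •
    (μH[(d : ℝ) - 1]).restrict (Metric.sphere 0 1)

/-! A negative label makes the network negative somewhere, so its two output weights are not both
positive: some neuron `j` has a partner of nonpositive weight, and then `N_θ(z) > 0` forces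
`⟪w_j, z⟫ > 0`. Hence the error set contains the half-space `{⟪w_j, z⟫ ≤ 0}`, which has probability
at least `1/2` because the uniform measure on the sphere is invariant under `z ↦ -z`.

That this measure is a probability measure needs `0 < μH[d-1](S^{d-1}) < ∞`: the lower bound
because the sphere projects onto the unit ball of a hyperplane, the upper bound because the
inverse stereographic projections from two antipodal poles map the closed ball of radius `2` onto
the two closed hemispheres and are Lipschitz there. -/

open Metric Module
open scoped ENNReal RealInnerProductSpace

section Sphere

variable {E : Type*} [NormedAddCommGroup E] [InnerProductSpace ℝ E]

lemma mem_stereoInvFunAux_image_closedBall_of_inner_nonpos {v z : E} (hv : ‖v‖ = 1)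
    (hz : z ∈ sphere (0 : E) 1) (hvz : ⟪v, z⟫ ≤ 0) :
    z ∈ (stereoInvFunAux v ∘ Subtype.val) '' closedBall (0 : (ℝ ∙ v)ᗮ) 2 := by
  have hzv : z ≠ v := by
    rintro rfl
    rw [real_inner_self_eq_norm_sq, hv] at hvz
    norm_num at hvz
  refine ⟨stereoToFun v z, ?_, congrArg Subtype.val (stereo_left_inv hv (x := ⟨z, hz⟩) hzv)⟩
  have hproj := (ℝ ∙ v)ᗮ.norm_orthogonalProjectionOnto_apply_le z
  rw [mem_sphere_zero_iff_norm.1 hz] at hproj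
  have hden : 1 ≤ 1 - ⟪v, z⟫ := by linarith
  rw [mem_closedBall_zero_iff, stereoToFun_apply, norm_smul, innerSL_apply_apply,
    Real.norm_of_nonneg (div_nonneg zero_le_two (zero_le_one.trans hden))]
  calc 2 / (1 - ⟪v, z⟫) * ‖(ℝ ∙ v)ᗮ.orthogonalProjectionOnto z‖ ≤ 2 / 1 * 1 := by gcongr
    _ = 2 := by norm_num

lemma closedBall_subset_orthogonalProjectionOnto_image_sphere {v : E} (hv : ‖v‖ = 1) :
    closedBall (0 : (ℝ ∙ v)ᗮ) 1 ⊆ (ℝ ∙ v)ᗮ.orthogonalProjectionOnto '' sphere (0 : E) 1 := by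
  intro y hy
  rw [mem_closedBall_zero_iff] at hy
  have hyv : ⟪(y : E), √(1 - ‖y‖ ^ 2) • v⟫ = 0 := by
    rw [inner_smul_right, Submodule.mem_orthogonal_singleton_iff_inner_left.1 y.2, mul_zero]
  refine ⟨y + √(1 - ‖y‖ ^ 2) • v, ?_, ?_⟩
  · have hy1 : ‖y‖ ^ 2 ≤ 1 := pow_le_one₀ (norm_nonneg _) hy
    rw [mem_sphere_zero_iff_norm, ← sq_eq_sq₀ (norm_nonneg _) zero_le_one,
      norm_add_sq_real, hyv, norm_smul, hv, mul_one, Real.norm_of_nonneg (Real.sqrt_nonneg _),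
      Real.sq_sqrt (sub_nonneg.2 hy1), Submodule.coe_norm]
    ring
  · rw [map_add, map_smul, Submodule.orthogonalProjectionOnto_mem_subspace_eq_self,
      Submodule.orthogonalProjectionOnto_orthogonalComplement_singleton_eq_zero, smul_zero,
      add_zero]

variable [FiniteDimensional ℝ E] [MeasurableSpace E] [BorelSpace E]

lemma hausdorffMeasure_stereoInvFunAux_image_closedBall_lt_top {k : ℕ}
    (hk : finrank ℝ E = k + 1) {v : E} (hv : ‖v‖ = 1) (r : ℝ) :
    μH[k] ((stereoInvFunAux v ∘ Subtype.val) '' closedBall (0 : (ℝ ∙ v)ᗮ) r) < ∞ := by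
  have : Fact (finrank ℝ E = k + 1) := ⟨hk⟩
  have hK : finrank ℝ (ℝ ∙ v)ᗮ = k :=
    Submodule.finrank_orthogonal_span_singleton (ne_zero_of_norm_ne_zero (by simp [hv]))
  obtain ⟨C, hC⟩ := (contDiff_stereoInvFunAux.comp (ℝ ∙ v)ᗮ.subtypeL.contDiff).locallyLipschitz
    |>.locallyLipschitzOn.exists_lipschitzOnWith_of_compact (isCompact_closedBall 0 r)
  refine (hC.hausdorffMeasure_image_le k.cast_nonneg).trans_lt
    (ENNReal.mul_lt_top (ENNReal.rpow_lt_top_of_nonneg k.cast_nonneg ENNReal.coe_ne_top) ?_)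
  rw [← hK]
  exact (isCompact_closedBall 0 r).measure_lt_top

lemma hausdorffMeasure_sphere_lt_top {k : ℕ} (hk : finrank ℝ E = k + 1) :
    μH[k] (sphere (0 : E) 1) < ∞ := by
  have : Nontrivial E := finrank_pos_iff (R := ℝ) |>.1 (by omega)
  obtain ⟨v, hv⟩ := exists_norm_eq E zero_le_one
  have hcover : sphere (0 : E) 1 ⊆
      (stereoInvFunAux v ∘ Subtype.val) '' closedBall (0 : (ℝ ∙ v)ᗮ) 2 ∪
        (stereoInvFunAux (-v) ∘ Subtype.val) '' closedBall (0 : (ℝ ∙ (-v))ᗮ) 2 := by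
    intro z hz
    rcases le_total ⟪v, z⟫ 0 with h | h
    · exact .inl (mem_stereoInvFunAux_image_closedBall_of_inner_nonpos hv hz h)
    · refine .inr (mem_stereoInvFunAux_image_closedBall_of_inner_nonpos (by rwa [norm_neg]) hz ?_)
      rwa [inner_neg_left, neg_nonpos]
  refine (measure_mono hcover).trans_lt
    ((measure_union_le _ _).trans_lt (ENNReal.add_lt_top.2 ⟨?_, ?_⟩))
  · exact hausdorffMeasure_stereoInvFunAux_image_closedBall_lt_top hk hv 2
  · exact hausdorffMeasure_stereoInvFunAux_image_closedBall_lt_top hk (by rwa [norm_neg]) 2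

lemma hausdorffMeasure_sphere_pos {k : ℕ} (hk : finrank ℝ E = k + 1) :
    0 < μH[k] (sphere (0 : E) 1) := by
  have : Nontrivial E := finrank_pos_iff (R := ℝ) |>.1 (by omega)
  obtain ⟨v, hv⟩ := exists_norm_eq E zero_le_one
  have : Fact (finrank ℝ E = k + 1) := ⟨hk⟩
  have hK : finrank ℝ (ℝ ∙ v)ᗮ = k :=
    Submodule.finrank_orthogonal_span_singleton (ne_zero_of_norm_ne_zero (by simp [hv]))
  have hP : LipschitzWith 1 (ℝ ∙ v)ᗮ.orthogonalProjectionOnto :=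
    (ContinuousLinearMap.lipschitz _).weaken (Submodule.orthogonalProjectionOnto_norm_le _)
  calc 0 < μH[k] (closedBall (0 : (ℝ ∙ v)ᗮ) 1) := by
        rw [← hK]
        exact measure_closedBall_pos _ _ one_pos
    _ ≤ μH[k] ((ℝ ∙ v)ᗮ.orthogonalProjectionOnto '' sphere (0 : E) 1) :=
        measure_mono (closedBall_subset_orthogonalProjectionOnto_image_sphere hv)
    _ ≤ μH[k] (sphere (0 : E) 1) := by
        simpa using hP.hausdorffMeasure_image_le k.cast_nonneg (sphere (0 : E) 1)

end Sphere

lemma half_le_measureReal_inner_nonpos {E : Type*} [NormedAddCommGroup E] [InnerProductSpace ℝ E]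
    [MeasurableSpace E] (μ : Measure E) [IsProbabilityMeasure μ] (hμ : ∀ A, μ (-A) = μ A) (a : E) :
    1 / 2 ≤ μ.real {z | ⟪a, z⟫ ≤ 0} := by
  have hcover : Set.univ = {z | ⟪a, z⟫ ≤ 0} ∪ -{z | ⟪a, z⟫ < 0} := by
    ext z
    simp [inner_neg_right, le_or_gt]
  have hneg : μ.real (-{z | ⟪a, z⟫ < 0}) ≤ μ.real {z | ⟪a, z⟫ ≤ 0} := by
    rw [measureReal_def, hμ]
    exact measureReal_mono fun z (hz : ⟪a, z⟫ < 0) => hz.le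
  have := measureReal_union_le (μ := μ) {z | ⟪a, z⟫ ≤ 0} (-{z | ⟪a, z⟫ < 0})
  rw [← hcover, probReal_univ] at this
  linarith

lemma isProbabilityMeasure_unifSphere {d : ℕ} (hd : 1 ≤ d) :
    IsProbabilityMeasure (unifSphere d) := by
  obtain ⟨k, rfl⟩ := Nat.exists_eq_add_of_le' hd
  have hk : finrank ℝ (EuclideanSpace ℝ (Fin (k + 1))) = k + 1 := finrank_euclideanSpace_fin
  have hexp : ((k + 1 : ℕ) : ℝ) - 1 = k := by push_cast; ring
  rw [unifSphere, hexp]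
  exact ProbabilityTheory.cond_isProbabilityMeasure_of_finite (hausdorffMeasure_sphere_pos hk).ne'
    (hausdorffMeasure_sphere_lt_top hk).ne

lemma unifSphere_neg (d : ℕ) (A : Set (EuclideanSpace ℝ (Fin d))) :
    unifSphere d (-A) = unifSphere d A := by
  have hS : -A ∩ sphere 0 1 = -(A ∩ sphere 0 1) := by
    rw [Set.inter_neg]
    congr 1
    ext
    simp
  rw [unifSphere, Measure.smul_apply, Measure.smul_apply,
    Measure.restrict_apply' isClosed_sphere.measurableSet,
    Measure.restrict_apply' isClosed_sphere.measurableSet, hS]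
  exact congrArg _ ((IsometryEquiv.neg _).hausdorffMeasure_preimage _ _)

lemma relu_nonneg (z : ℝ) : 0 ≤ relu z := le_max_right z 0

lemma relu_eq_zero_of_nonpos {z : ℝ} (hz : z ≤ 0) : relu z = 0 := max_eq_right hz

lemma inner_pos_of_netNB_pos {d n : ℕ} {v : Fin n → ℝ} {w : Fin n → EuclideanSpace ℝ (Fin d)}
    {j : Fin n} (hv : ∀ k, k ≠ j → v k ≤ 0) {z : EuclideanSpace ℝ (Fin d)}
    (hz : 0 < netNB v w z) : 0 < ⟪w j, z⟫ := by
  by_contra! hjz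
  refine hz.not_ge (Finset.sum_nonpos fun k _ => ?_)
  by_cases hk : k = j
  · rw [hk, relu_eq_zero_of_nonpos hjz, mul_zero]
  · exact mul_nonpos_of_nonpos_of_nonneg (hv k hk) (relu_nonneg _)

lemma netNB_nonneg {d n : ℕ} {v : Fin n → ℝ} (w : Fin n → EuclideanSpace ℝ (Fin d))
    (hv : ∀ j, 0 ≤ v j) (z : EuclideanSpace ℝ (Fin d)) : 0 ≤ netNB v w z :=
  Finset.sum_nonneg fun j _ => mul_nonneg (hv j) (relu_nonneg _)

lemma exists_forall_ne_nonpos_of_netNB_neg {d : ℕ} {v : Fin 2 → ℝ}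
    {w : Fin 2 → EuclideanSpace ℝ (Fin d)} {z : EuclideanSpace ℝ (Fin d)} (hz : netNB v w z < 0) :
    ∃ j, ∀ k, k ≠ j → v k ≤ 0 := by
  by_contra! h
  refine hz.not_ge (netNB_nonneg w (fun j => ?_) z)
  obtain ⟨k, hk, hvk⟩ := h (j + 1)
  obtain rfl : k = j := by omega
  exact hvk.le

theorem stmt4_general {d m : ℕ} (hd : 1 ≤ d)
    (v : Fin 2 → ℝ) (w : Fin 2 → EuclideanSpace ℝ (Fin d))
    (x : Fin m → EuclideanSpace ℝ (Fin d)) (y : Fin m → ℝ)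
    (hfit : ∀ i, 0 < y i * netNB v w (x i))
    (hneg : ∃ i, y i = -1) :
    1 / 2 ≤ (unifSphere d {z | netNB v w z ≤ 0}).toReal := by
  obtain ⟨i, hi⟩ := hneg
  have hxi : netNB v w (x i) < 0 := by simpa [hi] using hfit i
  obtain ⟨j, hj⟩ := exists_forall_ne_nonpos_of_netNB_neg hxi
  have := isProbabilityMeasure_unifSphere hd
  calc 1 / 2 ≤ (unifSphere d).real {z | ⟪w j, z⟫ ≤ 0} :=
        half_le_measureReal_inner_nonpos _ (unifSphere_neg d) (w j)
    _ ≤ (unifSphere d).real {z | netNB v w z ≤ 0} :=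
        measureReal_mono fun z hz => not_lt.1 fun h => (inner_pos_of_netNB_pos hj h).not_ge hz

/-- Catastrophic overfitting without bias (Proposition 4.4): a width-2 bias-less network
that correctly classifies a dataset containing a negative label has clean error ≥ 1/2. -/
theorem stmt4 {d m : ℕ} (hd : 1 ≤ d)
    (v : Fin 2 → ℝ) (w : Fin 2 → EuclideanSpace ℝ (Fin d))
    (x : Fin m → EuclideanSpace ℝ (Fin d)) (y : Fin m → ℝ)
    (hy : ∀ i, y i = 1 ∨ y i = -1)
    (hfit : ∀ i, 0 < y i * netNB v w (x i))
    (hneg : ∃ i, y i = -1) :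
    1 / 2 ≤ (unifSphere d {z | netNB v w z ≤ 0}).toReal :=
  stmt4_general hd v w x y hfit hneg
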